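/- arXiv:2208.00652 — 6 statements merged into one kernel-verified Lean document; each statement's English description precedes it below -/
import Mathlib

section
/- Let n, t be nonnegative integers with t ≥ 1 and n sufficiently large (n ≥ 100(t+1)^3 suffices). Define f(x1,x2,x3) = x1·x2·x3 + t·(x1(x1−1)/2 + x2(x2−1)/2 + x3(x3−1)/2) + C(t,3) on the domain D = {(x1,x2,x3) ∈ ℝ^3 : x1,x2,x3 ≥ 0, x1+x2+x3 = n−t}. Then the maximum of f over D is attained exactly at x1 = x2 = x3 = (n−t)/3. -/
/-!
Write a point of the simplex as `x i = r + a i` with `r = (n - t) / 3` and `∑ a i = 0`. Then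
`f(r, r, r) - f(x) = (∑ a i ^ 2) (r - t) / 2 - a 1 a 2 a 3`, and since every `a i ≥ -r` the cubic
term is at most `(∑ a i ^ 2) r / 3`. Hence the gap is at least `(∑ a i ^ 2) (r - 3 t) / 6`, which is
positive away from the centre as soon as `n - t > 9 t`.
-/

/-- The function `f_{n,t}` counting hyperedges of the almost extremal construction. -/
noncomputable def fnt (t : ℝ) (x1 x2 x3 : ℝ) : ℝ :=
  x1 * x2 * x3 + t * (x1 * (x1 - 1) / 2 + x2 * (x2 - 1) / 2 + x3 * (x3 - 1) / 2)
    + t * (t - 1) * (t - 2) / 6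

theorem mul_mul_le_of_add_add_eq_zero {r a b c : ℝ} (habc : a + b + c = 0)
    (ha : -r ≤ a) (hb : -r ≤ b) (hc : -r ≤ c) :
    a * b * c ≤ (a ^ 2 + b ^ 2 + c ^ 2) * r / 3 := by
  -- Schur-type identity:
  -- `9 * (rhs - lhs) = (a + r) (b - c) ^ 2 + (b + r) (c - a) ^ 2 + (c + r) (a - b) ^ 2`.
  obtain rfl : c = -a - b := by linarith
  linarith [mul_nonneg (neg_le_iff_add_nonneg.mp ha) (sq_nonneg (b - (-a - b))),
    mul_nonneg (neg_le_iff_add_nonneg.mp hb) (sq_nonneg (-a - b - a)),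
    mul_nonneg (neg_le_iff_add_nonneg.mp hc) (sq_nonneg (a - b))]

theorem fnt_center_sub (t r a b c : ℝ) (habc : a + b + c = 0) :
    fnt t r r r - fnt t (r + a) (r + b) (r + c) =
      (a ^ 2 + b ^ 2 + c ^ 2) * (r - t) / 2 - a * b * c := by
  obtain rfl : c = -a - b := by linarith
  unfold fnt
  ring

theorem sum_sq_mul_le_fnt_center_sub {t r a b c : ℝ} (habc : a + b + c = 0)
    (ha : -r ≤ a) (hb : -r ≤ b) (hc : -r ≤ c) :
    (a ^ 2 + b ^ 2 + c ^ 2) * (r - 3 * t) / 6 ≤ fnt t r r r - fnt t (r + a) (r + b) (r + c) := by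
  rw [fnt_center_sub t r a b c habc]
  linarith [mul_mul_le_of_add_add_eq_zero habc ha hb hc]

theorem fnt_lt_center {t s x1 x2 x3 : ℝ} (hts : 9 * t < s)
    (hx1 : 0 ≤ x1) (hx2 : 0 ≤ x2) (hx3 : 0 ≤ x3) (hsum : x1 + x2 + x3 = s)
    (hne : ¬(x1 = s / 3 ∧ x2 = s / 3 ∧ x3 = s / 3)) :
    fnt t x1 x2 x3 < fnt t (s / 3) (s / 3) (s / 3) := by
  have key := sum_sq_mul_le_fnt_center_sub (t := t) (r := s / 3)
    (a := x1 - s / 3) (b := x2 - s / 3) (c := x3 - s / 3) (by linarith)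
    (by linarith) (by linarith) (by linarith)
  simp only [add_sub_cancel] at key
  have hq : 0 < (x1 - s / 3) ^ 2 + (x2 - s / 3) ^ 2 + (x3 - s / 3) ^ 2 := by
    contrapose! hne
    refine ⟨?_, ?_, ?_⟩ <;>
      nlinarith [sq_nonneg (x1 - s / 3), sq_nonneg (x2 - s / 3), sq_nonneg (x3 - s / 3)]
  linarith [mul_pos hq (show 0 < s / 3 - 3 * t by linarith)]

theorem stmt2_general (n t : ℕ) (hn : 100 * (t + 1) ^ 3 ≤ n)
    (x1 x2 x3 : ℝ) (hx1 : 0 ≤ x1) (hx2 : 0 ≤ x2) (hx3 : 0 ≤ x3)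
    (hsum : x1 + x2 + x3 = (n : ℝ) - t) :
    fnt t x1 x2 x3 ≤ fnt t (((n : ℝ) - t) / 3) (((n : ℝ) - t) / 3) (((n : ℝ) - t) / 3) ∧
      (fnt t x1 x2 x3 = fnt t (((n : ℝ) - t) / 3) (((n : ℝ) - t) / 3) (((n : ℝ) - t) / 3) →
        x1 = ((n : ℝ) - t) / 3 ∧ x2 = ((n : ℝ) - t) / 3 ∧ x3 = ((n : ℝ) - t) / 3) := by
  have hts : 9 * (t : ℝ) < n - t := by
    have : 10 * t < n := by
      have := Nat.le_self_pow (n := 3) (by norm_num) (t + 1)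
      omega
    have : (10 * t : ℝ) < n := by exact_mod_cast this
    linarith
  by_cases hc : x1 = (n - t : ℝ) / 3 ∧ x2 = (n - t : ℝ) / 3 ∧ x3 = (n - t : ℝ) / 3
  · obtain ⟨rfl, rfl, rfl⟩ := hc
    exact ⟨le_rfl, fun _ => ⟨rfl, rfl, rfl⟩⟩
  · have hlt := fnt_lt_center hts hx1 hx2 hx3 hsum hc
    exact ⟨hlt.le, fun heq => absurd heq hlt.ne⟩

/-- For `t ≥ 1` and `n ≥ 100(t+1)^3`, the maximum of `f_{n,t}` over the simplex
`{x1,x2,x3 ≥ 0, x1+x2+x3 = n−t}` is attained exactly at `x1 = x2 = x3 = (n−t)/3`. -/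
theorem stmt2 (n t : ℕ) (ht : 1 ≤ t) (hn : 100 * (t + 1) ^ 3 ≤ n)
    (x1 x2 x3 : ℝ) (hx1 : 0 ≤ x1) (hx2 : 0 ≤ x2) (hx3 : 0 ≤ x3)
    (hsum : x1 + x2 + x3 = (n : ℝ) - t) :
    fnt t x1 x2 x3 ≤ fnt t (((n : ℝ) - t) / 3) (((n : ℝ) - t) / 3) (((n : ℝ) - t) / 3) ∧
      (fnt t x1 x2 x3 = fnt t (((n : ℝ) - t) / 3) (((n : ℝ) - t) / 3) (((n : ℝ) - t) / 3) →
        x1 = ((n : ℝ) - t) / 3 ∧ x2 = ((n : ℝ) - t) / 3 ∧ x3 = ((n : ℝ) - t) / 3) :=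
  stmt2_general n t hn x1 x2 x3 hx1 hx2 hx3 hsum
end

section
/- Let H be an F_5^t-free 3-uniform hypergraph on vertex set [n]. Suppose x, x' are vertices with codegree d(x,x') ≥ t+1, and S, T ⊆ [n] are disjoint vertex sets. Then d_{S,T}(x) + d_{S,T}(x') ≤ |S|·|T| + (t+3)·n, where d_{S,T}(v) is the number of pairs {y,z} with y ∈ S, z ∈ T, and {v,y,z} a hyperedge. -/
/-!
Fix `t + 1` common neighbours `v i` of `x, x'` and let `B = {x, x'} ∪ {v i}`. If a pair `y ∈ S`,
`z ∈ T` avoiding `B` spanned hyperedges with both `x` and `x'`, then `yzx`, `yzx'` and the `xx'v i`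
would form a copy of `F_5^t`. So the links of `x` and `x'` in `S × T` overlap only in pairs meeting
`B`, of which there are at most `|B| · n ≤ (t + 3) · n`; inclusion–exclusion finishes the proof.
-/

open Finset

namespace Finset

variable {α β : Type*} [DecidableEq α]

theorem ne_and_ne_and_ne_of_card_eq_three {a b c : α} (h : #{a, b, c} = 3) :
    a ≠ b ∧ a ≠ c ∧ b ≠ c := by
  refine ⟨?_, ?_, ?_⟩ <;> rintro rfl <;>
    simp only [insert_eq_of_mem, mem_insert_of_mem, mem_singleton, pair_comm] at h <;>
    exact absurd (h.symm.trans_le card_le_two) (by norm_num)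

theorem card_add_card_le_card_mul_card_add_card_inter [DecidableEq β] {S : Finset α}
    {T : Finset β} {A₁ A₂ : Finset (α × β)} (h₁ : A₁ ⊆ S ×ˢ T) (h₂ : A₂ ⊆ S ×ˢ T) :
    #A₁ + #A₂ ≤ #S * #T + #(A₁ ∩ A₂) := by
  rw [← card_union_add_card_inter, ← card_product]
  gcongr
  exact union_subset h₁ h₂

theorem card_le_card_mul_card_of_forall_fst_mem_or_snd_mem [Fintype α] {S T B : Finset α}
    (hST : Disjoint S T) {P : Finset (α × α)} (hP : P ⊆ S ×ˢ T)
    (hPB : ∀ p ∈ P, p.1 ∈ B ∨ p.2 ∈ B) : #P ≤ #B * Fintype.card α := by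
  have hsub : P ⊆ (S ∩ B) ×ˢ T ∪ S ×ˢ (T ∩ B) := fun p hp => by
    obtain ⟨hS, hT⟩ := mem_product.mp (hP hp)
    rcases hPB p hp with h | h <;> simp [*]
  have hSTB : #(S ∩ B) + #(T ∩ B) ≤ #B := by
    rw [← card_union_of_disjoint (hST.mono inter_subset_left inter_subset_left)]
    exact card_le_card (union_subset inter_subset_right inter_subset_right)
  calc #P ≤ #((S ∩ B) ×ˢ T) + #(S ×ˢ (T ∩ B)) := (card_le_card hsub).trans (card_union_le _ _)
    _ = #(S ∩ B) * #T + #S * #(T ∩ B) := by rw [card_product, card_product]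
    _ ≤ #(S ∩ B) * Fintype.card α + Fintype.card α * #(T ∩ B) := by
        gcongr <;> exact card_le_univ _
    _ = (#(S ∩ B) + #(T ∩ B)) * Fintype.card α := by ring
    _ ≤ #B * Fintype.card α := by gcongr

end Finset

section F5t

variable {α : Type*} [DecidableEq α]

/-- `a, b, c, d, v i` play the roles of the vertices `1, 2, 3, 4, 5 + i` of `F_5^t`. -/
def ContainsF5t (t : ℕ) (H : Finset (Finset α)) : Prop :=
  ∃ (a b c d : α) (v : Fin (t + 1) → α),
    ({a, b, c, d} : Finset α).card = 4 ∧ Function.Injective v ∧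
    (∀ i, v i ∉ ({a, b, c, d} : Finset α)) ∧
    ({a, b, c} : Finset α) ∈ H ∧ ({a, b, d} : Finset α) ∈ H ∧
    (∀ i, ({c, d, v i} : Finset α) ∈ H)

theorem containsF5t_of_mem_of_mem {t : ℕ} {H : Finset (Finset α)} (h3 : ∀ e ∈ H, #e = 3)
    {x x' y z : α} {v : Fin (t + 1) → α} (hv : Function.Injective v)
    (hxx'v : ∀ i, {x, x', v i} ∈ H) (hyz : y ≠ z)
    (hy : y ∉ insert x (insert x' (univ.image v))) (hz : z ∉ insert x (insert x' (univ.image v)))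
    (hxyz : {x, y, z} ∈ H) (hx'yz : {x', y, z} ∈ H) : ContainsF5t t H := by
  have hx := fun i => ne_and_ne_and_ne_of_card_eq_three (h3 _ (hxx'v i))
  simp only [mem_insert, mem_image, mem_univ, true_and, not_or, not_exists] at hy hz
  refine ⟨y, z, x, x', v, ?_, hv, fun i => ?_, by rwa [pair_comm, insert_comm],
    by rwa [pair_comm, insert_comm], hxx'v⟩
  · rw [card_insert_of_notMem, card_insert_of_notMem, card_pair (hx 0).1] <;>
      simp [hyz, hy.1, hy.2.1, hz.1, hz.2.1]
  · simp only [mem_insert, mem_singleton, not_or]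
    exact ⟨hy.2.2 i, hz.2.2 i, ((hx i).2.1 ·.symm), ((hx i).2.2 ·.symm)⟩

end F5t

/-- In an `F_5^t`-free 3-graph, if `d(x,x') ≥ t+1` and `S, T` are disjoint,
then `d_{S,T}(x) + d_{S,T}(x') ≤ |S|·|T| + (t+3)·n`. -/
theorem stmt4 (n t : ℕ) (H : Finset (Finset (Fin n)))
    (h3 : ∀ e ∈ H, e.card = 3)
    -- `H` is `F_5^t`-free: no copy of the 3-graph on `{1,…,5+t}` with hyperedges
    -- `{123, 124} ∪ {34k : 5 ≤ k ≤ 5+t}`.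
    (hfree : ¬ ∃ (a b c d : Fin n) (v : Fin (t + 1) → Fin n),
      ({a, b, c, d} : Finset (Fin n)).card = 4 ∧
      Function.Injective v ∧
      (∀ i, v i ∉ ({a, b, c, d} : Finset (Fin n))) ∧
      ({a, b, c} : Finset (Fin n)) ∈ H ∧ ({a, b, d} : Finset (Fin n)) ∈ H ∧
      (∀ i, ({c, d, v i} : Finset (Fin n)) ∈ H))
    (x x' : Fin n)
    (hcod : t + 1 ≤ (Finset.univ.filter
      (fun v => ({x, x', v} : Finset (Fin n)) ∈ H)).card)
    (S T : Finset (Fin n)) (hST : Disjoint S T) :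
    ((S ×ˢ T).filter (fun p => ({x, p.1, p.2} : Finset (Fin n)) ∈ H)).card
      + ((S ×ˢ T).filter (fun p => ({x', p.1, p.2} : Finset (Fin n)) ∈ H)).card
      ≤ S.card * T.card + (t + 3) * n := by
  set v := (univ.filter fun v => ({x, x', v} : Finset (Fin n)) ∈ H).orderEmbOfCardLe hcod
  have hxx'v i : ({x, x', v i} : Finset (Fin n)) ∈ H :=
    (mem_filter.mp (orderEmbOfCardLe_mem _ hcod i)).2
  set B := insert x (insert x' (univ.image v))
  have hB : #B ≤ t + 3 := by
    grw [card_insert_le, card_insert_le, card_image_le, card_univ, Fintype.card_fin]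
  set A₁ := (S ×ˢ T).filter (fun p => ({x, p.1, p.2} : Finset (Fin n)) ∈ H)
  set A₂ := (S ×ˢ T).filter (fun p => ({x', p.1, p.2} : Finset (Fin n)) ∈ H)
  have hcommon : ∀ p ∈ A₁ ∩ A₂, p.1 ∈ B ∨ p.2 ∈ B := by
    intro p hp
    simp only [A₁, A₂, mem_inter, mem_filter, mem_product] at hp
    by_contra! hpB
    exact hfree (containsF5t_of_mem_of_mem h3 v.injective hxx'v
      (hST.forall_ne_finset hp.1.1.1 hp.1.1.2) hpB.1 hpB.2 hp.1.2 hp.2.2)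
  calc #A₁ + #A₂ ≤ #S * #T + #(A₁ ∩ A₂) :=
        card_add_card_le_card_mul_card_add_card_inter (filter_subset _ _) (filter_subset _ _)
    _ ≤ #S * #T + #B * n := by
        grw [card_le_card_mul_card_of_forall_fst_mem_or_snd_mem hST
          (inter_subset_left.trans (filter_subset _ _)) hcommon, Fintype.card_fin]
    _ ≤ #S * #T + (t + 3) * n := by grw [hB]
end

section
/- For every odd integer t ≥ 1, there exists a 3-uniform hypergraph H on t+3 vertices with at least (t/3)·C(t+3,2) − (t+3)/3 hyperedges in which every pair of vertices has codegree at most t. -/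
/-!
Put `m = t + 2` and take the vertex set `ZMod m ∪ {∞}` (as `Option (ZMod m)`), of size `t + 3`.
In the complete 3-graph every pair has codegree `m - 1 = t + 1`, so deleting a family of triples
that covers every pair leaves codegree at most `t`, and it remains to find a covering family of
at most `(m + 1)(m + 2) / 6` triples. Take the zero-sum triples `{x, y, z}` of the group together
with, for every `x`, one triple `{∞, x, x'}`. A pair determines the third vertex of a zero-sum
triple through it, and the only pairs missed are the `{x, -2x}` with `3x ≠ 0`, which are covered
by choosing `x' = -2x`. If `K` elements satisfy `3x = 0`, this counts
`6·#zero-sum ≤ m(m - 1) - 2(m - K)`. For `3x = 0 ≠ x` choose `x' = -x`; as `m` is odd, `-x ≠ x`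
and the two share their triple, so there are at most `m - (K - 1)/2` triples through `∞`. The
sum is at most `(m + 1)(m + 2)/6` because `K ≥ 1`.
-/

open Finset

section TripleComplement

variable {α : Type*} [Fintype α] [DecidableEq α]

lemma card_filter_powersetCard_three_mem_pair_le {u v : α} (huv : u ≠ v) :
    #{e ∈ (univ : Finset α).powersetCard 3 | u ∈ e ∧ v ∈ e} ≤ Fintype.card α - 2 := by
  calc _ ≤ #(({u, v}ᶜ : Finset α).image fun w => insert w {u, v}) := card_le_card ?_
    _ ≤ #({u, v}ᶜ : Finset α) := card_image_le
    _ = _ := by rw [card_compl, card_pair huv]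
  intro e he
  rw [mem_filter, mem_powersetCard] at he
  obtain ⟨w, hw, rfl⟩ := exists_eq_insert_iff.2
    ⟨insert_subset_iff.2 ⟨he.2.1, singleton_subset_iff.2 he.2.2⟩, by rw [card_pair huv, he.1.2]⟩
  exact mem_image_of_mem _ (mem_compl.2 hw)

lemma card_filter_sdiff_mem_pair_le {H : Finset (Finset α)} {u v : α} (huv : u ≠ v)
    {T : Finset α} (hT : T ∈ H) (hT3 : #T = 3) (huT : u ∈ T) (hvT : v ∈ T) :
    #{e ∈ univ.powersetCard 3 \ H | u ∈ e ∧ v ∈ e} ≤ Fintype.card α - 3 := by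
  have hTmem : T ∈ {e ∈ (univ : Finset α).powersetCard 3 | u ∈ e ∧ v ∈ e} := by
    simp [hT3, huT, hvT]
  have hsub : {e ∈ univ.powersetCard 3 \ H | u ∈ e ∧ v ∈ e} ⊆
      ({e ∈ (univ : Finset α).powersetCard 3 | u ∈ e ∧ v ∈ e}).erase T := by
    intro e he
    simp only [mem_filter, mem_sdiff] at he
    exact mem_erase.2 ⟨fun h => he.1.2 (h ▸ hT), mem_filter.2 ⟨he.1.1, he.2⟩⟩
  have := card_le_card hsub
  rw [card_erase_of_mem hTmem] at this
  have := card_filter_powersetCard_three_mem_pair_le huv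
  omega

end TripleComplement

lemma two_mul_card_image_le_of_map_eq {α β : Type*} [DecidableEq β] {s : Finset α}
    {f : α → β} (σ : α → α) (hσs : ∀ x ∈ s, σ x ∈ s) (hσ : ∀ x ∈ s, σ x ≠ x)
    (hf : ∀ x ∈ s, f (σ x) = f x) : 2 * #(s.image f) ≤ #s := by
  classical
  refine mul_card_image_le_card s 2 fun b hb => ?_
  obtain ⟨x, hx, rfl⟩ := mem_image.1 hb
  calc 2 = #({x, σ x} : Finset α) := (card_pair (hσ x hx).symm).symm
    _ ≤ #{y ∈ s | f y = f x} := card_le_card (insert_subset (mem_filter.2 ⟨hx, rfl⟩)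
      (singleton_subset_iff.2 (mem_filter.2 ⟨hσs x hx, hf x hx⟩)))

lemma neg_ne_self_of_odd_card {G : Type*} [AddCommGroup G] [Fintype G]
    (hG : Odd (Fintype.card G)) {x : G} (hx : x ≠ 0) : -x ≠ x := by
  have hcop : (Nat.card G).Coprime 2 := by
    rwa [Nat.card_eq_fintype_card, Nat.coprime_two_right]
  refine fun h => hx (hcop.nsmul_right_bijective.injective ?_)
  simp only [smul_zero]
  linear_combination (norm := module) -h

lemma ne_neg_two_nsmul_of_three_nsmul_ne_zero {G : Type*} [AddCommGroup G] {x : G}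
    (hx : 3 • x ≠ 0) : x ≠ -(2 • x) :=
  fun h => hx (by linear_combination (norm := module) h)

lemma injOn_pair_neg_two_nsmul {G : Type*} [AddCommGroup G] [DecidableEq G] :
    Set.InjOn (fun x : G => ({x, -(2 • x)} : Finset G)) {x | 3 • x ≠ 0} := by
  intro x _ y hy hxy
  replace hxy : ({x, -(2 • x)} : Finset G) = {y, -(2 • y)} := hxy
  have hx' : x ∈ ({y, -(2 • y)} : Finset G) := hxy ▸ mem_insert_self _ _
  have hy' : y ∈ ({x, -(2 • x)} : Finset G) := hxy.symm ▸ mem_insert_self _ _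
  simp only [mem_insert, mem_singleton] at hx' hy'
  rcases hx' with rfl | hx'
  · rfl
  rcases hy' with rfl | hy'
  · rfl
  exact absurd (by linear_combination (norm := module) -hy' + 2 • hx') hy

section ZeroSumTriples

variable {G : Type*} [AddCommGroup G] [Fintype G] [DecidableEq G]

variable (G) in
def zeroSumTriples : Finset (Finset G) := {T ∈ univ.powersetCard 3 | ∑ x ∈ T, x = 0}

lemma mem_zeroSumTriples {T : Finset G} :
    T ∈ zeroSumTriples G ↔ #T = 3 ∧ ∑ x ∈ T, x = 0 := by
  simp [zeroSumTriples]

lemma eq_insert_neg_sum_of_mem_zeroSumTriples {T e : Finset G} (hT : T ∈ zeroSumTriples G)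
    (heT : e ⊆ T) (he : #e = 2) : T = insert (-∑ x ∈ e, x) e := by
  rw [mem_zeroSumTriples] at hT
  obtain ⟨d, hd, rfl⟩ := exists_eq_insert_iff.2 ⟨heT, by omega⟩
  rw [sum_insert hd] at hT
  rw [← eq_neg_of_add_eq_zero_left hT.2]

lemma insert_neg_add_mem_zeroSumTriples {x y : G} (hxy : x ≠ y) (hx : -x - y ≠ x)
    (hy : -x - y ≠ y) : {x, y, -x - y} ∈ zeroSumTriples G := by
  refine mem_zeroSumTriples.2 ⟨card_eq_three.2 ⟨x, y, -x - y, hxy, hx.symm, hy.symm, rfl⟩, ?_⟩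
  rw [sum_insert (by simp [hxy, hx.symm]), sum_pair hy.symm]
  abel

lemma pairwiseDisjoint_powersetCard_two_zeroSumTriples :
    (zeroSumTriples G : Set (Finset G)).PairwiseDisjoint (powersetCard 2) := by
  intro T hT T' hT' hne
  refine disjoint_left.2 fun e he he' => hne ?_
  rw [mem_powersetCard] at he he'
  rw [eq_insert_neg_sum_of_mem_zeroSumTriples hT he.1 he.2,
    eq_insert_neg_sum_of_mem_zeroSumTriples hT' he'.1 he'.2]

lemma not_pair_neg_two_nsmul_subset_of_mem_zeroSumTriples {x : G} (hx : 3 • x ≠ 0)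
    {T : Finset G} (hT : T ∈ zeroSumTriples G) : ¬{x, -(2 • x)} ⊆ T := by
  intro hsub
  have hT3 := (mem_zeroSumTriples.1 hT).1
  have hpair := card_pair (ne_neg_two_nsmul_of_three_nsmul_ne_zero hx)
  rw [eq_insert_neg_sum_of_mem_zeroSumTriples hT hsub hpair, sum_pair
    (ne_neg_two_nsmul_of_three_nsmul_ne_zero hx), show -(x + -(2 • x)) = x by module,
    insert_eq_of_mem (mem_insert_self _ _), hpair] at hT3
  omega

lemma three_mul_card_zeroSumTriples_add_le :
    3 * #(zeroSumTriples G) + #{x : G | 3 • x ≠ 0} ≤ (Fintype.card G).choose 2 := by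
  set N := ({x : G | 3 • x ≠ 0} : Finset G)
  set P := (zeroSumTriples G).biUnion (powersetCard 2)
  set Q := N.image fun x => ({x, -(2 • x)} : Finset G)
  have hP : #P = 3 * #(zeroSumTriples G) := by
    rw [card_biUnion pairwiseDisjoint_powersetCard_two_zeroSumTriples, sum_congr rfl fun T hT => by
      rw [card_powersetCard, (mem_zeroSumTriples.1 hT).1], sum_const, smul_eq_mul, mul_comm]
    rfl
  have hQ : #Q = #N := card_image_of_injOn fun x hx y hy =>
    injOn_pair_neg_two_nsmul (by simpa [N] using hx) (by simpa [N] using hy)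
  have hPQ : Disjoint P Q := by
    refine disjoint_left.2 fun e heP heQ => ?_
    obtain ⟨T, hT, heT⟩ := mem_biUnion.1 heP
    obtain ⟨x, hx, rfl⟩ := mem_image.1 heQ
    exact not_pair_neg_two_nsmul_subset_of_mem_zeroSumTriples (mem_filter.1 hx).2 hT
      (mem_powersetCard.1 heT).1
  have hPQsub : P ∪ Q ⊆ univ.powersetCard 2 := by
    refine union_subset (biUnion_subset.2 fun T _ => powersetCard_mono (subset_univ T)) ?_
    refine image_subset_iff.2 fun x hx => mem_powersetCard.2 ⟨subset_univ _, ?_⟩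
    exact card_pair (ne_neg_two_nsmul_of_three_nsmul_ne_zero (mem_filter.1 hx).2)
  calc 3 * #(zeroSumTriples G) + #N = #(P ∪ Q) := by rw [card_union_of_disjoint hPQ, hP, hQ]
    _ ≤ #((univ : Finset G).powersetCard 2) := card_le_card hPQsub
    _ = _ := by rw [card_powersetCard, card_univ]

end ZeroSumTriples

section Mate

variable {G : Type*} [AddCommGroup G] [DecidableEq G]

/-- For `3 • x ≠ 0` the triple `{∞, x, -2x}` also covers the pair `{x, -2x}`, which no zero-sum
triple contains; `a` is any nonzero element. -/
def mate (a x : G) : G := if x = 0 then a else if 3 • x = 0 then -x else -(2 • x)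

lemma mate_of_three_nsmul_ne_zero (a : G) {x : G} (hx : 3 • x ≠ 0) : mate a x = -(2 • x) := by
  rw [mate, if_neg (by rintro rfl; simp at hx), if_neg hx]

lemma mate_of_three_nsmul_eq_zero (a : G) {x : G} (hx0 : x ≠ 0) (hx : 3 • x = 0) :
    mate a x = -x := by
  rw [mate, if_neg hx0, if_pos hx]

lemma mate_ne_self [Fintype G] (hG : Odd (Fintype.card G)) {a : G} (ha : a ≠ 0) (x : G) :
    mate a x ≠ x := by
  by_cases hx0 : x = 0
  · rwa [mate, if_pos hx0, hx0]
  by_cases hx : 3 • x = 0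
  · rw [mate_of_three_nsmul_eq_zero a hx0 hx]
    exact neg_ne_self_of_odd_card hG hx0
  · rw [mate_of_three_nsmul_ne_zero a hx]
    exact fun h => hx (by linear_combination (norm := module) -h)

lemma pair_mate_neg (a : G) {x : G} (hx0 : x ≠ 0) (hx : 3 • x = 0) :
    ({-x, mate a (-x)} : Finset G) = {x, mate a x} := by
  rw [mate_of_three_nsmul_eq_zero a hx0 hx,
    mate_of_three_nsmul_eq_zero a (neg_ne_zero.2 hx0) (by rw [smul_neg, hx, neg_zero]), neg_neg,
    pair_comm]

end Mate

section Covering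

variable {G : Type*} [AddCommGroup G] [Fintype G] [DecidableEq G]

def apexTriples (a : G) : Finset (Finset (Option G)) :=
  univ.image fun x => insertNone {x, mate a x}

def coveringTriples (a : G) : Finset (Finset (Option G)) :=
  (zeroSumTriples G).image (map Function.Embedding.some) ∪ apexTriples a

lemma two_mul_card_apexTriples_le (hG : Odd (Fintype.card G)) (a : G) :
    2 * #(apexTriples a) ≤ Fintype.card G + 1 + #{x : G | 3 • x ≠ 0} := by
  set f := fun x : G => insertNone {x, mate a x}
  set N := ({x : G | 3 • x ≠ 0} : Finset G)
  set T := ({x : G | 3 • x = 0} : Finset G).erase 0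
  have hsub : apexTriples a ⊆ insert (f 0) (N.image f ∪ T.image f) := by
    refine image_subset_iff.2 fun x _ => ?_
    by_cases hx : 3 • x = 0
    · by_cases hx0 : x = 0
      · rw [hx0]; exact mem_insert_self _ _
      · exact mem_insert_of_mem (mem_union_right _ (mem_image_of_mem _ (by simp [T, hx, hx0])))
    · exact mem_insert_of_mem (mem_union_left _ (mem_image_of_mem _ (by simp [N, hx])))
  have hT : 2 * #(T.image f) ≤ #T := by
    have hmemT {x : G} (hx : x ∈ T) : x ≠ 0 ∧ 3 • x = 0 := by simpa [T] using hx
    refine two_mul_card_image_le_of_map_eq Neg.neg (fun x hx => ?_)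
      (fun x hx => neg_ne_self_of_odd_card hG (hmemT hx).1)
      (fun x hx => congrArg insertNone (pair_mate_neg a (hmemT hx).1 (hmemT hx).2))
    simp [T, (hmemT hx).1, (hmemT hx).2]
  have hNT : #N + (#T + 1) = Fintype.card G := by
    rw [card_erase_add_one (by simp), add_comm]
    exact card_filter_add_card_filter_not _
  calc 2 * #(apexTriples a) ≤ 2 * (#(N.image f) + #(T.image f) + 1) := by
        grw [card_le_card hsub, card_insert_le, card_union_le]
    _ ≤ 2 * (#N + #(T.image f) + 1) := by grw [card_image_le]
    _ ≤ _ := by omega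

lemma card_eq_three_of_mem_coveringTriples (hG : Odd (Fintype.card G)) {a : G} (ha : a ≠ 0)
    {T : Finset (Option G)} (hT : T ∈ coveringTriples a) : #T = 3 := by
  rcases mem_union.1 hT with hT | hT
  · obtain ⟨S, hS, rfl⟩ := mem_image.1 hT
    rw [card_map, (mem_zeroSumTriples.1 hS).1]
  · obtain ⟨x, -, rfl⟩ := mem_image.1 hT
    rw [card_insertNone, card_pair (mate_ne_self hG ha x).symm]

lemma exists_mem_coveringTriples (a : G) {u v : Option G} (huv : u ≠ v) :
    ∃ T ∈ coveringTriples a, u ∈ T ∧ v ∈ T := by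
  have apex_mem (x : G) : insertNone {x, mate a x} ∈ coveringTriples a :=
    mem_union_right _ (mem_image_of_mem _ (mem_univ x))
  match u, v with
  | none, none => exact absurd rfl huv
  | none, some x => exact ⟨_, apex_mem x, by simp, by simp⟩
  | some x, none => exact ⟨_, apex_mem x, by simp, by simp⟩
  | some x, some y =>
    have hxy : x ≠ y := by simpa using huv
    by_cases hy : y = -(2 • x)
    · have hx3 : 3 • x ≠ 0 := fun h => hxy (by linear_combination (norm := module) -hy + h)
      refine ⟨_, apex_mem x, by simp, ?_⟩
      simp [mate_of_three_nsmul_ne_zero a hx3, hy]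
    by_cases hx : x = -(2 • y)
    · have hy3 : 3 • y ≠ 0 := fun h => hxy (by linear_combination (norm := module) hx - h)
      refine ⟨_, apex_mem y, ?_, by simp⟩
      simp [mate_of_three_nsmul_ne_zero a hy3, hx]
    refine ⟨_, mem_union_left _ (mem_image_of_mem _ (insert_neg_add_mem_zeroSumTriples hxy
      (fun h => hy (by linear_combination (norm := module) -h))
      (fun h => hx (by linear_combination (norm := module) -h)))), by simp, by simp⟩

lemma six_mul_card_coveringTriples_le (hG : Odd (Fintype.card G)) (a : G) :
    6 * #(coveringTriples a) ≤ (Fintype.card G + 1) * (Fintype.card G + 2) := by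
  have hzero := three_mul_card_zeroSumTriples_add_le (G := G)
  have hapex := two_mul_card_apexTriples_le hG a
  have hcov : #(coveringTriples a) ≤ #(zeroSumTriples G) + #(apexTriples a) :=
    (card_union_le _ _).trans (by grw [card_image_le])
  have hN : #{x : G | 3 • x ≠ 0} ≤ Fintype.card G - 1 := by
    rw [← card_univ, ← card_erase_of_mem (mem_univ 0)]
    exact card_le_card fun x hx => mem_erase.2 ⟨by rintro rfl; simp at hx, mem_univ x⟩
  have hchoose : 2 * (Fintype.card G).choose 2 = Fintype.card G * (Fintype.card G - 1) := by
    rw [Nat.choose_two_right, Nat.mul_div_cancel' (Nat.even_mul_pred_self _).two_dvd]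
  obtain ⟨m, hm⟩ : ∃ m, Fintype.card G = m + 1 :=
    ⟨_, (Nat.succ_pred_eq_of_pos Fintype.card_pos).symm⟩
  rw [hm] at hzero hapex hN hchoose ⊢
  rw [Nat.add_sub_cancel] at hN hchoose
  nlinarith

theorem exists_triple_system_codegree_le (hG : Odd (Fintype.card G)) [Nontrivial G] :
    ∃ H : Finset (Finset (Option G)), (∀ e ∈ H, #e = 3) ∧
      (∀ x y, x ≠ y → #{e ∈ H | x ∈ e ∧ y ∈ e} ≤ Fintype.card G - 2) ∧
      6 * (Fintype.card G + 1).choose 3 ≤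
        6 * #H + (Fintype.card G + 1) * (Fintype.card G + 2) := by
  obtain ⟨a, ha⟩ := exists_ne (0 : G)
  have hsub : coveringTriples a ⊆ univ.powersetCard 3 := fun T hT =>
    mem_powersetCard.2 ⟨subset_univ T, card_eq_three_of_mem_coveringTriples hG ha hT⟩
  refine ⟨univ.powersetCard 3 \ coveringTriples a, fun e he => ?_, fun x y hxy => ?_, ?_⟩
  · exact (mem_powersetCard.1 (mem_sdiff.1 he).1).2
  · obtain ⟨T, hT, hxT, hyT⟩ := exists_mem_coveringTriples a hxy
    simpa using card_filter_sdiff_mem_pair_le hxy hT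
      (card_eq_three_of_mem_coveringTriples hG ha hT) hxT hyT
  · have hcard := card_le_card hsub
    rw [card_powersetCard, card_univ, Fintype.card_option] at hcard
    rw [card_sdiff_of_subset hsub, card_powersetCard, card_univ, Fintype.card_option]
    have := six_mul_card_coveringTriples_le hG a
    omega

end Covering

lemma card_filter_map_finsetCongr_mem_pair {α β : Type*} [DecidableEq α] [DecidableEq β]
    (e : α ≃ β) (H : Finset (Finset α)) (x y : β) :
    #{s ∈ H.map e.finsetCongr.toEmbedding | x ∈ s ∧ y ∈ s} =
      #{s ∈ H | e.symm x ∈ s ∧ e.symm y ∈ s} := by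
  rw [filter_map, card_map]
  congr 1
  ext s
  simp [Equiv.finsetCongr_apply, mem_map_equiv]

lemma div_three_mul_choose_two_sub_le {t h : ℕ}
    (hh : 6 * (t + 3).choose 3 ≤ 6 * h + (t + 3) * (t + 4)) :
    (t : ℝ) / 3 * ((t + 3).choose 2) - ((t : ℝ) + 3) / 3 ≤ h := by
  have hthree : 6 * (t + 3).choose 3 = (t + 3) * (t + 2) * (t + 1) := by
    rw [show 6 = Nat.factorial 3 from rfl, ← Nat.descFactorial_eq_factorial_mul_choose]
    simp [Nat.descFactorial_succ, mul_comm]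
  have hreal : ((t + 3) * (t + 2) * (t + 1) : ℝ) ≤ 6 * h + (t + 3) * (t + 4) := by
    exact_mod_cast hthree ▸ hh
  rw [Nat.cast_choose_two]
  push_cast
  nlinarith

theorem stmt9_general (t : ℕ) (ht : Odd t) :
    ∃ H : Finset (Finset (Fin (t + 3))),
      (∀ e ∈ H, e.card = 3) ∧
      (∀ x y : Fin (t + 3), x ≠ y →
        (H.filter (fun e => x ∈ e ∧ y ∈ e)).card ≤ t) ∧
      (t : ℝ) / 3 * ((t + 3).choose 2) - ((t : ℝ) + 3) / 3 ≤ (H.card : ℝ) := by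
  have : Fact (1 < t + 2) := ⟨by omega⟩
  have hG : Odd (Fintype.card (ZMod (t + 2))) := by
    rw [ZMod.card]; exact ht.add_even even_two
  obtain ⟨H, hcard, hcodeg, hsize⟩ := exists_triple_system_codegree_le hG
  let e : Option (ZMod (t + 2)) ≃ Fin (t + 3) := Fintype.equivFinOfCardEq (by simp)
  refine ⟨H.map e.finsetCongr.toEmbedding, fun s hs => ?_, fun x y hxy => ?_, ?_⟩
  · obtain ⟨s, hs', rfl⟩ := mem_map.1 hs
    simpa [Equiv.finsetCongr_apply] using hcard s hs'
  · rw [card_filter_map_finsetCongr_mem_pair]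
    simpa using hcodeg _ _ (e.symm.injective.ne hxy)
  · rw [card_map]
    exact div_three_mul_choose_two_sub_le (by simpa using hsize)

/-- For every odd `t ≥ 1`, there exists a 3-graph on `t+3` vertices with
at least `(t/3)·C(t+3,2) − (t+3)/3` hyperedges in which every pair of vertices has
codegree at most `t`. -/
theorem stmt9 (t : ℕ) (ht : Odd t) (ht1 : 1 ≤ t) :
    ∃ H : Finset (Finset (Fin (t + 3))),
      (∀ e ∈ H, e.card = 3) ∧
      (∀ x y : Fin (t + 3), x ≠ y →
        (H.filter (fun e => x ∈ e ∧ y ∈ e)).card ≤ t) ∧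
      (t : ℝ) / 3 * ((t + 3).choose 2) - ((t : ℝ) + 3) / 3 ≤ (H.card : ℝ) :=
  stmt9_general t ht
end

section
/- Let t ≥ 0, ε > 0 be sufficiently small, and let H be a 3-uniform hypergraph on [n] (n large) with a partition π = (V_1, V_2, V_3) of [n] such that |H \ H_π| ≤ ε·n^3 and |H| ≥ (1/27 − ε)·n^3, where H_π is the set of hyperedges with one vertex in each part. If |V_i| ≤ (1/3 − 3√ε)·n for some i, then |H| ≤ (1/27 − (5/4)ε − (27/4)ε^{3/2})·n^3. Consequently, every part satisfies (1/3 − 3√ε)·n < |V_i| < (1/3 + 6√ε)·n. -/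
/-!
Every crossing edge `e` of `H` is determined by the three singletons `e ∩ Vᵢ`, so `H_π` has at
most `|V₁||V₂||V₃|` edges and `|H| ≤ |V₁||V₂||V₃| + εn³`. By AM-GM the product of the two parts
other than `Vᵢ` is at most `((n - |Vᵢ|)/2)²`, and `x ↦ x((n - x)/2)²` is increasing on `[0, n/3]`;
at `x = (1/3 - 3√ε)n` it equals `(1/27 - (9/4)ε - (27/4)ε^{3/2})n³`, which gives the bound on `|H|`.
That bound contradicts `|H| ≥ (1/27 - ε)n³`, so every part exceeds `(1/3 - 3√ε)n`, and then each
part is less than `n` minus two such lower bounds.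
-/

open Finset

section CrossingEdges

variable {α : Type*} [DecidableEq α] (V₁ V₂ V₃ : Finset α)

theorem card_filter_crossing_le_mul (H : Finset (Finset α))
    (hcover : ∀ e ∈ H, e ⊆ V₁ ∪ V₂ ∪ V₃) :
    #(H.filter fun e => #(e ∩ V₁) = 1 ∧ #(e ∩ V₂) = 1 ∧ #(e ∩ V₃) = 1)
      ≤ #V₁ * #V₂ * #V₃ := by
  have hinj : Set.InjOn (fun e => (e ∩ V₁, e ∩ V₂, e ∩ V₃))
      (H.filter fun e => #(e ∩ V₁) = 1 ∧ #(e ∩ V₂) = 1 ∧ #(e ∩ V₃) = 1) := by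
    intro e he e' he' heq
    simp only [Prod.mk.injEq] at heq
    have hsplit : ∀ e ∈ H, e = e ∩ V₁ ∪ e ∩ V₂ ∪ e ∩ V₃ := fun e he => by
      rw [← inter_union_distrib_left, ← inter_union_distrib_left, inter_eq_left.mpr (hcover e he)]
    rw [hsplit e (mem_filter.mp he).1, hsplit e' (mem_filter.mp he').1, heq.1, heq.2.1, heq.2.2]
  have hmaps : Set.MapsTo (fun e => (e ∩ V₁, e ∩ V₂, e ∩ V₃))
      (H.filter fun e => #(e ∩ V₁) = 1 ∧ #(e ∩ V₂) = 1 ∧ #(e ∩ V₃) = 1)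
      ((V₁.powersetCard 1 ×ˢ V₂.powersetCard 1 ×ˢ V₃.powersetCard 1 : Finset _) : Set _) := by
    intro e he
    obtain ⟨-, h₁, h₂, h₃⟩ := mem_filter.mp he
    simp [mem_powersetCard, h₁, h₂, h₃]
  simpa [card_product, card_powersetCard, mul_assoc] using card_le_card_of_injOn _ hmaps hinj

theorem card_le_mul_add_card_sdiff_filter_crossing (H : Finset (Finset α))
    (hcover : ∀ e ∈ H, e ⊆ V₁ ∪ V₂ ∪ V₃) :
    #H ≤ #V₁ * #V₂ * #V₃ +
      #(H \ H.filter fun e => #(e ∩ V₁) = 1 ∧ #(e ∩ V₂) = 1 ∧ #(e ∩ V₃) = 1) := by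
  have := card_sdiff_add_card_eq_card (filter_subset
    (fun e => #(e ∩ V₁) = 1 ∧ #(e ∩ V₂) = 1 ∧ #(e ∩ V₃) = 1) H)
  have := card_filter_crossing_le_mul V₁ V₂ V₃ H hcover
  omega

theorem card_add_card_add_card_of_partition [Fintype α] (h₁₂ : Disjoint V₁ V₂)
    (h₁₃ : Disjoint V₁ V₃) (h₂₃ : Disjoint V₂ V₃) (huniv : V₁ ∪ V₂ ∪ V₃ = univ) :
    #V₁ + #V₂ + #V₃ = Fintype.card α := by
  rw [← card_union_of_disjoint h₁₂, ← card_union_of_disjoint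
    (disjoint_union_left.mpr ⟨h₁₃, h₂₃⟩), huniv, card_univ]

end CrossingEdges

section ThreeParts

theorem monotoneOn_mul_sq_half_sub (n : ℝ) :
    MonotoneOn (fun x => x * ((n - x) / 2) ^ 2) (Set.Icc 0 (n / 3)) := by
  rintro x ⟨hx, hxn⟩ y ⟨hy, hyn⟩ hxy
  -- `4(f y - f x) = (y - x)((n - x - y)² - xy)` and `n - x - y ≥ n/3 ≥ √(xy)`.
  have key : (x * y) ≤ (n - x - y) ^ 2 := by nlinarith
  nlinarith [mul_nonneg (sub_nonneg.mpr hxy) (sub_nonneg.mpr key)]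

variable {a b c n : ℝ}

theorem mul_mul_le_of_le_of_le_third (ha : 0 ≤ a) (hsum : a + b + c = n) {x₀ : ℝ}
    (hax : a ≤ x₀) (hx₀ : x₀ ≤ n / 3) : a * (b * c) ≤ x₀ * ((n - x₀) / 2) ^ 2 :=
  calc a * (b * c) ≤ a * ((n - a) / 2) ^ 2 := by
        gcongr
        nlinarith [four_mul_le_sq_add b c]
    _ ≤ x₀ * ((n - x₀) / 2) ^ 2 :=
        monotoneOn_mul_sq_half_sub n ⟨ha, hax.trans hx₀⟩ ⟨ha.trans hax, hx₀⟩ hax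

theorem mul_mul_le_of_mem_le (ha : 0 ≤ a) (hb : 0 ≤ b) (hc : 0 ≤ c) (hsum : a + b + c = n)
    {x x₀ : ℝ} (hx : x ∈ [a, b, c]) (hxx₀ : x ≤ x₀) (hx₀ : x₀ ≤ n / 3) :
    a * b * c ≤ x₀ * ((n - x₀) / 2) ^ 2 := by
  simp only [List.mem_cons, List.not_mem_nil, or_false] at hx
  rcases hx with rfl | rfl | rfl
  · rw [mul_assoc]
    exact mul_mul_le_of_le_of_le_third ha hsum hxx₀ hx₀
  · have := mul_mul_le_of_le_of_le_third hb (show x + a + c = n by linarith) hxx₀ hx₀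
    linarith
  · have := mul_mul_le_of_le_of_le_third hc (show x + a + b = n by linarith) hxx₀ hx₀
    linarith

variable {ε h : ℝ}

theorem mul_mul_add_le_of_mem_le_third_sub_sqrt (ha : 0 ≤ a) (hb : 0 ≤ b) (hc : 0 ≤ c)
    (hsum : a + b + c = n) (hε : 0 ≤ ε) {x : ℝ} (hx : x ∈ [a, b, c])
    (hxle : x ≤ (1 / 3 - 3 * √ε) * n) :
    a * b * c + ε * n ^ 3 ≤ (1 / 27 - 5 / 4 * ε - 27 / 4 * (ε * √ε)) * n ^ 3 := by
  have hn : 0 ≤ n := by linarith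
  have hsq : √ε ^ 2 = ε := Real.sq_sqrt hε
  have hprod := mul_mul_le_of_mem_le ha hb hc hsum hx hxle
    (by nlinarith [Real.sqrt_nonneg ε] : (1 / 3 - 3 * √ε) * n ≤ n / 3)
  have hvalue : (1 / 3 - 3 * √ε) * n * ((n - (1 / 3 - 3 * √ε) * n) / 2) ^ 2
      = (1 / 27 - 9 / 4 * ε - 27 / 4 * (ε * √ε)) * n ^ 3 := by
    linear_combination (-9 / 4 * n ^ 3 - 27 / 4 * n ^ 3 * √ε) * hsq
  linarith

theorem third_sub_sqrt_lt_and_lt_third_add_sqrt (ha : 0 ≤ a) (hb : 0 ≤ b) (hc : 0 ≤ c)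
    (hsum : a + b + c = n) (hn : 0 < n) (hε : 0 < ε) (hH : h ≤ a * b * c + ε * n ^ 3)
    (hlow : (1 / 27 - ε) * n ^ 3 ≤ h) :
    ∀ x ∈ [a, b, c], (1 / 3 - 3 * √ε) * n < x ∧ x < (1 / 3 + 6 * √ε) * n := by
  have hgt : ∀ x ∈ [a, b, c], (1 / 3 - 3 * √ε) * n < x := fun x hx => by
    by_contra! hxle
    have := mul_mul_add_le_of_mem_le_third_sub_sqrt ha hb hc hsum hε.le hx hxle
    nlinarith [pow_pos hn 3, Real.sqrt_nonneg ε, mul_nonneg hε.le (Real.sqrt_nonneg ε)]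
  have ha' := hgt a (by simp)
  have hb' := hgt b (by simp)
  have hc' := hgt c (by simp)
  intro x hx
  refine ⟨hgt x hx, ?_⟩
  simp only [List.mem_cons, List.not_mem_nil, or_false] at hx
  rcases hx with rfl | rfl | rfl <;> linarith

end ThreeParts

/-- Stability side-conditions. If a 3-graph `H` on `[n]` with a partition
`(V1,V2,V3)` satisfies `|H \ H_π| ≤ ε n^3` and `|H| ≥ (1/27 − ε) n^3`, then (a) if some
part has size at most `(1/3 − 3√ε)n`, then `|H| ≤ (1/27 − (5/4)ε − (27/4)ε^{3/2}) n^3`,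
and consequently (b) every part `V` satisfies `(1/3 − 3√ε)n < |V| < (1/3 + 6√ε)n`. -/
theorem stmt11 :
    ∃ ε₀ : ℝ, 0 < ε₀ ∧ ∀ ε : ℝ, 0 < ε → ε < ε₀ →
      ∃ N : ℕ, ∀ n : ℕ, N < n →
        ∀ (H : Finset (Finset (Fin n))) (V1 V2 V3 : Finset (Fin n)),
          (∀ e ∈ H, e.card = 3) →
          Disjoint V1 V2 → Disjoint V1 V3 → Disjoint V2 V3 →
          V1 ∪ V2 ∪ V3 = Finset.univ →
          (((H \ H.filter (fun e =>
              (e ∩ V1).card = 1 ∧ (e ∩ V2).card = 1 ∧ (e ∩ V3).card = 1)).card : ℝ)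
            ≤ ε * n ^ 3) →
          (((1 : ℝ) / 27 - ε) * n ^ 3 ≤ (H.card : ℝ)) →
          ((∃ V ∈ [V1, V2, V3], (V.card : ℝ) ≤ ((1 : ℝ) / 3 - 3 * Real.sqrt ε) * n) →
              (H.card : ℝ)
                ≤ ((1 : ℝ) / 27 - 5 / 4 * ε - 27 / 4 * (ε * Real.sqrt ε)) * n ^ 3) ∧
            (∀ V ∈ [V1, V2, V3],
              ((1 : ℝ) / 3 - 3 * Real.sqrt ε) * n < (V.card : ℝ) ∧
                (V.card : ℝ) < ((1 : ℝ) / 3 + 6 * Real.sqrt ε) * n) := by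
  refine ⟨1, one_pos, fun ε hε _ => ⟨0, fun n hn H V1 V2 V3 _ h12 h13 h23 huniv hbad hlower => ?_⟩⟩
  have hsum : (#V1 : ℝ) + #V2 + #V3 = n := by
    exact_mod_cast (card_add_card_add_card_of_partition V1 V2 V3 h12 h13 h23 huniv).trans
      (Fintype.card_fin n)
  have hH : (#H : ℝ) ≤ #V1 * #V2 * #V3 + ε * n ^ 3 := by
    have := card_le_mul_add_card_sdiff_filter_crossing V1 V2 V3 H
      fun e _ => huniv.symm ▸ subset_univ e
    have : (#H : ℝ) ≤ #V1 * #V2 * #V3 + #(H \ H.filter fun e =>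
        #(e ∩ V1) = 1 ∧ #(e ∩ V2) = 1 ∧ #(e ∩ V3) = 1) := by
      exact_mod_cast this
    linarith
  have hmem : ∀ V ∈ [V1, V2, V3], (#V : ℝ) ∈ [(#V1 : ℝ), #V2, #V3] :=
    fun _ hV => List.mem_map_of_mem (f := fun V => (#V : ℝ)) hV
  refine ⟨fun ⟨V, hV, hVle⟩ => hH.trans ?_, fun V hV => ?_⟩
  · exact mul_mul_add_le_of_mem_le_third_sub_sqrt (by positivity) (by positivity) (by positivity)
      hsum hε.le (hmem V hV) hVle
  · exact third_sub_sqrt_lt_and_lt_third_add_sqrt (by positivity) (by positivity) (by positivity)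
      hsum (by exact_mod_cast hn) hε hH hlower _ (hmem V hV)
end

section
/- Let a_1 ≤ a_2 ≤ a_3 be positive integers with a_1 + a_2 + a_3 = n, a_3 ≥ a_1 + 2, and a_2 ≥ (1/3 − 0.01)·n. Let t ≥ 0 and suppose n is sufficiently large relative to t. If g(a) denotes any function satisfying (t/3)·C(a,2) − a/3 − 4t^2 ≤ g(a) ≤ (t/3)·C(a,2) for all a, then a_1·a_2·a_3 + g(a_1) + g(a_2) + g(a_3) < (a_1+1)·a_2·(a_3−1) + g(a_1+1) + g(a_2) + g(a_3−1). -/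
/-!
Moving a vertex from the largest part to the smallest changes the product term by
`a₂ (a₃ - a₁ - 1)`. Since `g` is within `a/3 + 4t²` of `(t/3)·C(a,2)`, and the increments of
`C(a,2)` are `C(a+1,2) - C(a,2) = a`, the two changes of `g` cost at most
`(t/3)(a₃ - a₁ - 1) + (a₁ + a₃)/3 + 8t²`. The gain is therefore at least
`(a₃ - a₁ - 1)(a₂ - t/3) - (a₁ + a₃)/3 - 8t² ≥ (4/3)a₂ - n/3 - t/3 - 8t²`, which is positive
because `a₂` is close to `n/3` and `n` is large compared with `t²`.
-/

def ApproxChooseTwo (c E : ℝ) (g : ℕ → ℝ) : Prop :=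
  ∀ a : ℕ, c * a.choose 2 - a / 3 - E ≤ g a ∧ g a ≤ c * a.choose 2

lemma cast_choose_two_succ (a : ℕ) : ((a + 1).choose 2 : ℝ) = a.choose 2 + a := by
  rw [Nat.choose_succ_succ, Nat.choose_one_right, add_comm]
  push_cast
  rfl

namespace ApproxChooseTwo

variable {c E : ℝ} {g : ℕ → ℝ}

lemma le_sub_succ (hg : ApproxChooseTwo c E g) (a : ℕ) :
    c * a - (a + 1) / 3 - E ≤ g (a + 1) - g a := by
  have hlower := (hg (a + 1)).1
  have hupper := (hg a).2
  rw [cast_choose_two_succ] at hlower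
  push_cast at hlower
  linarith

lemma le_sub_pred (hg : ApproxChooseTwo c E g) (a : ℕ) :
    -(c * a) - a / 3 - E ≤ g a - g (a + 1) := by
  have hlower := (hg a).1
  have hupper := (hg (a + 1)).2
  rw [cast_choose_two_succ] at hupper
  linarith

lemma shift_gain_ge (hg : ApproxChooseTwo c E g) (a₁ a₃ : ℕ) (ha₃ : 1 ≤ a₃) (a₂ : ℝ) :
    ((a₃ : ℝ) - a₁ - 1) * (a₂ - c) - (a₁ + a₃) / 3 - 2 * E ≤
      ((a₁ : ℝ) + 1) * a₂ * ((a₃ : ℝ) - 1) + g (a₁ + 1) + g (a₃ - 1) -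
        (a₁ * a₂ * a₃ + g a₁ + g a₃) := by
  obtain ⟨b, rfl⟩ : ∃ b, a₃ = b + 1 := ⟨a₃ - 1, by omega⟩
  have hsmall := hg.le_sub_succ a₁
  have hlarge := hg.le_sub_pred b
  rw [Nat.add_sub_cancel]
  push_cast
  linarith

end ApproxChooseTwo

lemma shift_gain_lower_bound_pos {t n a₁ a₂ a₃ : ℝ} (ht : 0 ≤ t) (hn : 100 * (t + 1) ^ 2 ≤ n)
    (hsum : a₁ + a₂ + a₃ = n) (h₁₃ : a₁ + 2 ≤ a₃)
    (ha₂ : (1 / 3 - 0.01) * n ≤ a₂) :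
    0 < (a₃ - a₁ - 1) * (a₂ - t / 3) - (a₁ + a₃) / 3 - 8 * t ^ 2 := by
  have ha₂t : t / 3 ≤ a₂ := by nlinarith
  have hgap : a₂ - t / 3 ≤ (a₃ - a₁ - 1) * (a₂ - t / 3) := by
    nlinarith [mul_nonneg (by linarith : (0 : ℝ) ≤ a₃ - a₁ - 2) (by linarith : 0 ≤ a₂ - t / 3)]
  nlinarith

/-- the shifting inequality: moving a vertex from the largest part to the
smallest strictly increases the construction size. -/
theorem stmt13 (t : ℕ) :
    ∃ N : ℕ, ∀ n : ℕ, N ≤ n → ∀ a1 a2 a3 : ℕ, ∀ g : ℕ → ℝ,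
      0 < a1 → a1 ≤ a2 → a2 ≤ a3 → a1 + a2 + a3 = n → a1 + 2 ≤ a3 →
      ((1 : ℝ) / 3 - 0.01) * n ≤ (a2 : ℝ) →
      (∀ a : ℕ,
        (t : ℝ) / 3 * (a.choose 2) - (a : ℝ) / 3 - 4 * (t : ℝ) ^ 2 ≤ g a ∧
          g a ≤ (t : ℝ) / 3 * (a.choose 2)) →
      (a1 : ℝ) * a2 * a3 + g a1 + g a2 + g a3
        < ((a1 : ℝ) + 1) * a2 * ((a3 : ℝ) - 1) + g (a1 + 1) + g a2 + g (a3 - 1) := by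
  refine ⟨100 * (t + 1) ^ 2, fun n hn a1 a2 a3 g _ _ _ hsum h13 ha2 hg => ?_⟩
  have hgain := ApproxChooseTwo.shift_gain_ge (c := (t : ℝ) / 3) (E := 4 * (t : ℝ) ^ 2) hg
    a1 a3 (by omega) a2
  have hpos := shift_gain_lower_bound_pos (a₁ := (a1 : ℝ)) (a₃ := (a3 : ℝ))
    t.cast_nonneg (by exact_mod_cast hn) (by exact_mod_cast hsum) (by exact_mod_cast h13) ha2
  linarith
end

section
/- Let t ≥ 0 and let H be an F_5^t-free 3-uniform hypergraph on [n] with a partition (V_1,V_2,V_3). Suppose x ∈ V_1, y ∈ V_2, z ∈ V_3 are such that {x,y,z} ∈ H and there exist t+2 vertices y_1,...,y_{t+1}, y in V_2 with {x,z,y_i} ∈ H for all i and also a vertex x' ∈ V_1 with {x',y,x} ∈ H and {x',y,z} ∈ H. Then H contains a copy of F_5^t, a contradiction; hence for any F_5^t-free H, if {x',y,x}, {x',y,z} ∈ H with x,x' ∈ V_1, y ∈ V_2, z ∈ V_3, then the codegree d_{V_2}(x,z) ≤ t+1. -/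
/-!
The edges `x'yx`, `x'yz` and the edges `xzw` for the common neighbours `w ≠ y` of `x, z` in `V₂`
form an `F_5^t` as soon as there are `t + 1` such `w`. Distinctness of the vertices comes for free
from the edges being 3-sets, except that `x'` must avoid the `w`'s, which holds as `x' ∈ V₁`.
-/

open Finset

def ContainsF5 {α : Type*} [DecidableEq α] (H : Finset (Finset α)) (t : ℕ) : Prop :=
  ∃ (a b c d : α) (v : Fin (t + 1) → α),
    ({a, b, c, d} : Finset α).card = 4 ∧
    Function.Injective v ∧
    (∀ i, v i ∉ ({a, b, c, d} : Finset α)) ∧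
    ({a, b, c} : Finset α) ∈ H ∧ ({a, b, d} : Finset α) ∈ H ∧
    (∀ i, ({c, d, v i} : Finset α) ∈ H)

theorem Finset.exists_injective_fin_mem_of_le_card {α : Type*} {s : Finset α} {k : ℕ}
    (h : k ≤ s.card) : ∃ v : Fin k → α, Function.Injective v ∧ ∀ i, v i ∈ s := by
  obtain ⟨e⟩ := Function.Embedding.nonempty_of_card_le (α := Fin k) (β := s) (by simpa using h)
  exact ⟨fun i => e i, Subtype.val_injective.comp e.injective, fun i => (e i).2⟩

theorem containsF5_of_edges {α : Type*} [DecidableEq α] {H : Finset (Finset α)}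
    (h3 : ∀ e ∈ H, e.card = 3) {t : ℕ} {a b c d : α}
    (habc : ({a, b, c} : Finset α) ∈ H) (habd : ({a, b, d} : Finset α) ∈ H)
    {W : Finset α} (hW : ∀ w ∈ W, ({c, d, w} : Finset α) ∈ H)
    (haW : a ∉ W) (hbW : b ∉ W) (hcard : t + 1 ≤ W.card) : ContainsF5 H t := by
  obtain ⟨hab, hac, hbc⟩ := card_triple_eq_three_iff.mp (h3 _ habc)
  obtain ⟨-, had, hbd⟩ := card_triple_eq_three_iff.mp (h3 _ habd)
  have hedge : ∀ w ∈ W, c ≠ d ∧ c ≠ w ∧ d ≠ w := fun w hw =>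
    card_triple_eq_three_iff.mp (h3 _ (hW w hw))
  obtain ⟨v, hv_inj, hvW⟩ := exists_injective_fin_mem_of_le_card hcard
  have hcd : c ≠ d := (hedge _ (hvW 0)).1
  refine ⟨a, b, c, d, v, card_eq_four.mpr ⟨a, b, c, d, hab, hac, had, hbc, hbd, hcd, rfl⟩,
    hv_inj, fun i => ?_, habc, habd, fun i => hW _ (hvW i)⟩
  obtain ⟨-, hcv, hdv⟩ := hedge _ (hvW i)
  have hav : a ≠ v i := fun h => haW (h ▸ hvW i)
  have hbv : b ≠ v i := fun h => hbW (h ▸ hvW i)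
  simp only [mem_insert, mem_singleton, not_or]
  exact ⟨hav.symm, hbv.symm, hcv.symm, hdv.symm⟩

theorem stmt14_general (n t : ℕ) (H : Finset (Finset (Fin n)))
    (h3 : ∀ e ∈ H, e.card = 3)
    (hfree : ¬ ∃ (a b c d : Fin n) (v : Fin (t + 1) → Fin n),
      ({a, b, c, d} : Finset (Fin n)).card = 4 ∧
      Function.Injective v ∧
      (∀ i, v i ∉ ({a, b, c, d} : Finset (Fin n))) ∧
      ({a, b, c} : Finset (Fin n)) ∈ H ∧ ({a, b, d} : Finset (Fin n)) ∈ H ∧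
      (∀ i, ({c, d, v i} : Finset (Fin n)) ∈ H))
    (V1 V2 : Finset (Fin n))
    (h12 : Disjoint V1 V2)
    (x x' y z : Fin n)
    (hx' : x' ∈ V1)
    (he1 : ({x', y, x} : Finset (Fin n)) ∈ H)
    (he2 : ({x', y, z} : Finset (Fin n)) ∈ H) :
    (V2.filter (fun w => ({x, z, w} : Finset (Fin n)) ∈ H)).card ≤ t + 1 := by
  by_contra! hlt
  set S := V2.filter (fun w => ({x, z, w} : Finset (Fin n)) ∈ H)
  have hedge : ∀ w ∈ S.erase y, ({x, z, w} : Finset (Fin n)) ∈ H :=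
    fun w hw => (mem_filter.mp (mem_of_mem_erase hw)).2
  have hx'S : x' ∉ S.erase y :=
    fun h => disjoint_left.mp h12 hx' (mem_filter.mp (mem_of_mem_erase h)).1
  have hcard : t + 1 ≤ (S.erase y).card := by
    have := pred_card_le_card_erase (s := S) (a := y)
    omega
  exact hfree (containsF5_of_edges h3 he1 he2 hedge hx'S (notMem_erase y S) hcard)

/-- In an `F_5^t`-free 3-graph with a vertex partition `(V1, V2, V3)`,
if `x, x' ∈ V1`, `y ∈ V2`, `z ∈ V3` and `{x',y,x}, {x',y,z} ∈ H`, then the codegree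
`d_{V2}(x,z) ≤ t+1`. -/
theorem stmt14 (n t : ℕ) (H : Finset (Finset (Fin n)))
    (h3 : ∀ e ∈ H, e.card = 3)
    (hfree : ¬ ∃ (a b c d : Fin n) (v : Fin (t + 1) → Fin n),
      ({a, b, c, d} : Finset (Fin n)).card = 4 ∧
      Function.Injective v ∧
      (∀ i, v i ∉ ({a, b, c, d} : Finset (Fin n))) ∧
      ({a, b, c} : Finset (Fin n)) ∈ H ∧ ({a, b, d} : Finset (Fin n)) ∈ H ∧
      (∀ i, ({c, d, v i} : Finset (Fin n)) ∈ H))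
    (V1 V2 V3 : Finset (Fin n))
    (h12 : Disjoint V1 V2) (h13 : Disjoint V1 V3) (h23 : Disjoint V2 V3)
    (hcover : V1 ∪ V2 ∪ V3 = Finset.univ)
    (x x' y z : Fin n)
    (hx : x ∈ V1) (hx' : x' ∈ V1) (hy : y ∈ V2) (hz : z ∈ V3)
    (he1 : ({x', y, x} : Finset (Fin n)) ∈ H)
    (he2 : ({x', y, z} : Finset (Fin n)) ∈ H) :
    (V2.filter (fun w => ({x, z, w} : Finset (Fin n)) ∈ H)).card ≤ t + 1 :=
  stmt14_general n t H h3 hfree V1 V2 h12 x x' y z hx' he1 he2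
end
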